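/- If a vertex v of degree exactly 2 is removed from a Laman graph G on n ≥ 3 vertices, the resulting graph on n - 1 vertices is again a Laman graph (no edges need to be added). -/

import Mathlib

/-!
Deleting `v` removes one vertex and exactly its two incident edges, so the edge count `2n - 3`
becomes `2(n - 1) - 3`. The sparsity condition passes to every induced subgraph, because the edges
of `G.induce S` spanned by `s` embed into the edges of `G` spanned by the image of `s`.
-/

open scoped Classical

/-- Laman (minimally rigid in the plane) graph on a finite vertex set. -/
def IsLaman {V : Type*} [Fintype V] (G : SimpleGraph V) : Prop :=
  G.edgeFinset.card = 2 * Fintype.card V - 3 ∧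
  ∀ s : Finset V, 2 ≤ s.card →
    (G.edgeFinset.filter (fun e => ∀ v ∈ e, v ∈ s)).card ≤ 2 * s.card - 3

namespace SimpleGraph

open Finset

variable {V : Type*} [Fintype V]

def IsLamanSparse (G : SimpleGraph V) : Prop :=
  ∀ s : Finset V, 2 ≤ #s → #{e ∈ G.edgeFinset | ∀ v ∈ e, v ∈ s} ≤ 2 * #s - 3

theorem IsLamanSparse.induce {G : SimpleGraph V} (hG : G.IsLamanSparse) (S : Set V)
    [Fintype S] : (G.induce S).IsLamanSparse := by
  intro s hs
  let ι := Function.Embedding.subtype (· ∈ S)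
  refine (card_le_card_of_injOn ι.sym2Map (t := {e ∈ G.edgeFinset | ∀ x ∈ e, x ∈ s.map ι}) ?_
    ι.sym2Map.injective.injOn).trans ?_
  · intro e he
    induction e using Sym2.ind with
    | _ a b =>
      simp only [coe_filter, Set.mem_ofPred_eq, mem_edgeFinset, mem_edgeSet, Sym2.mem_iff,
        forall_eq_or_imp, forall_eq, Function.Embedding.sym2Map_apply, Sym2.map_mk] at he ⊢
      obtain ⟨hab, ha, hb⟩ := he
      exact ⟨hab, mem_map_of_mem ι ha, mem_map_of_mem ι hb⟩
  · calc _ ≤ 2 * #(s.map ι) - 3 := hG _ (by rwa [card_map])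
      _ = 2 * #s - 3 := by rw [card_map]

theorem card_edgeFinset_induce_ne (G : SimpleGraph V) [DecidableRel G.Adj] (v : V)
    [Fintype (G.induce {u | u ≠ v}).edgeSet] :
    #(G.induce {u | u ≠ v}).edgeFinset = #G.edgeFinset - G.degree v := by
  rw [← card_edgeFinset_deleteIncidenceSet, ← card_edgeFinset_induce_compl_singleton]
  congr!

end SimpleGraph

theorem stmt16_general {V : Type*} [Fintype V] (G : SimpleGraph V)
    (hG : IsLaman G)
    (v : V) (hdeg : G.degree v = 2) :
    IsLaman (G.induce {u : V | u ≠ v}) := by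
  obtain ⟨hcard, hsparse⟩ := hG
  refine ⟨?_, SimpleGraph.IsLamanSparse.induce hsparse _⟩
  have hV : Fintype.card {u : V | u ≠ v} = Fintype.card V - 1 := by
    simp [Finset.filter_ne']
  rw [SimpleGraph.card_edgeFinset_induce_ne, hcard, hdeg, hV]
  omega

/-- Removing a vertex of degree exactly 2 from a Laman graph on at least 3 vertices
(the inverse Henneberg-1 operation) yields a Laman graph. -/
theorem stmt16 {V : Type*} [Fintype V] (G : SimpleGraph V)
    (hG : IsLaman G) (hn : 3 ≤ Fintype.card V)
    (v : V) (hdeg : G.degree v = 2) :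
    IsLaman (G.induce {u : V | u ≠ v}) :=
  stmt16_general G hG v hdeg
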